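/- arXiv:1008.0293 — 8 statements merged into one kernel-verified Lean document; each statement's English description precedes it below -/
import Mathlib

section
/- Let A₀ be the restriction of A to ker R and suppose λ ∈ ρ(A₀) (the resolvent set of A₀ as an operator in X) and R restricted to ker(λ - A) is bijective onto ∂X with inverse D_λ : ∂X → ker(λ - A). If Z is a Banach space with ker(λ - A) ⊆ Z ↪ Y continuously, and (A,R) : D(A) ⊆ Y → X × ∂X is closed, then D_λ is bounded from ∂X to Z. -/
open Filter Topology

/-- Joint closedness of the operator `u ↦ (A u, R u)` with domain `p ⊆ Y`,
regarded as an operator from `Y` into `X × ∂X`. -/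
def IsJointlyClosed {Y X bX : Type*} [NormedAddCommGroup Y] [NormedAddCommGroup X]
    [NormedAddCommGroup bX] [NormedSpace ℂ Y] [NormedSpace ℂ X] [NormedSpace ℂ bX]
    (p : Submodule ℂ Y) (A : Y →ₗ[ℂ] X) (R : Y →ₗ[ℂ] bX) : Prop :=
  ∀ u : ℕ → Y, (∀ n, u n ∈ p) →
    ∀ (ul : Y) (w : X) (x : bX),
      Tendsto u atTop (𝓝 ul) →
      Tendsto (fun n => A (u n)) atTop (𝓝 w) →
      Tendsto (fun n => R (u n)) atTop (𝓝 x) →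
      ul ∈ p ∧ A ul = w ∧ R ul = x

/-- Let `λ ∈ ρ(A₀)` (A₀ = A restricted to ker R) and suppose `R` restricted to
`ker(λ - A)` is bijective with inverse `D_λ : ∂X → ker(λ - A)`.  If `Z` is a Banach
space with `ker(λ - A) ⊆ Z ↪ Y` continuously and `(A,R)` is closed, then `D_λ` is
bounded from `∂X` to `Z`. -/
theorem stmt2 {Y X Z bX : Type*} [NormedAddCommGroup Y] [NormedAddCommGroup X]
    [NormedAddCommGroup Z] [NormedAddCommGroup bX]
    [NormedSpace ℂ Y] [NormedSpace ℂ X] [NormedSpace ℂ Z] [NormedSpace ℂ bX]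
    [CompleteSpace Y] [CompleteSpace X] [CompleteSpace Z] [CompleteSpace bX]
    (i : Y →L[ℂ] X) (hi : Function.Injective i)
    (k : Z →L[ℂ] Y) (hk : Function.Injective k)
    (p : Submodule ℂ Y) (A : Y →ₗ[ℂ] X) (R : Y →ₗ[ℂ] bX) (lam : ℂ)
    (hcl : IsJointlyClosed p A R)
    (hsurj : ∀ x : bX, ∃ u, u ∈ p ∧ R u = x)
    -- `lam ∈ ρ(A₀)`: a bounded two-sided resolvent for `A₀ := A|_{ker R}`
    (Rres : X →L[ℂ] X)
    (hRres : ∀ w : X, ∃ u, u ∈ p ∧ R u = 0 ∧ i u = Rres w ∧ lam • Rres w - A u = w)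
    (hRres' : ∀ u ∈ p, R u = 0 → Rres (lam • i u - A u) = i u)
    -- `ker (lam - A) ⊆ Z`
    (hker : ∀ u ∈ p, A u = lam • i u → ∃ z : Z, k z = u)
    -- the Dirichlet operator: the inverse of `R` restricted to `ker (lam - A)`
    (D : bX →ₗ[ℂ] Z)
    (hD : ∀ x : bX, k (D x) ∈ p ∧ A (k (D x)) = lam • i (k (D x)) ∧ R (k (D x)) = x)
    (hDinv : ∀ u ∈ p, A u = lam • i u → k (D (R u)) = u) :
    ∃ C : ℝ, ∀ x : bX, ‖D x‖ ≤ C * ‖x‖ := by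
  have hcont : Continuous D := by
    apply D.continuous_of_seq_closed_graph
    intro x xl z hx hz
    -- u n := k (D (x n))
    have hu : Tendsto (fun n => k (D (x n))) atTop (𝓝 (k z)) :=
      k.continuous.continuousAt.tendsto.comp hz
    have hA : Tendsto (fun n => A (k (D (x n)))) atTop (𝓝 (lam • i (k z))) := by
      have : (fun n => A (k (D (x n)))) = fun n => lam • i (k (D (x n))) := by
        funext n; exact (hD (x n)).2.1
      rw [this]
      exact (i.continuous.continuousAt.tendsto.comp hu).const_smul lam
    have hR : Tendsto (fun n => R (k (D (x n)))) atTop (𝓝 xl) := by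
      have : (fun n => R (k (D (x n)))) = x := by
        funext n; exact (hD (x n)).2.2
      rwa [this]
    obtain ⟨hmem, hAeq, hReq⟩ :=
      hcl (fun n => k (D (x n))) (fun n => (hD (x n)).1) (k z) (lam • i (k z)) xl hu hA hR
    have := hDinv (k z) hmem hAeq
    rw [hReq] at this
    exact (hk this).symm
  obtain ⟨C, -, hC⟩ := (⟨D, hcont⟩ : bX →L[ℂ] Z).bound
  exact ⟨C, fun x => hC x⟩
end

section
/- With 𝔸(u,v,x) = (v, Au, Lu), D(𝔸) = D(A) × Y × ∂X, on 𝕏 = Y × X × ∂X, the iterated domains satisfy D(𝔸^{2k−1}) = D(A^k) × D((A^{k−1})|_Y) × ∂X and D(𝔸^{2k}) = D((A^k)|_Y) × D(A^k) × ∂X for all k ≥ 1, where (A^k)|_Y denotes the part of A^k in Y, i.e., D((A^k)|_Y) = {u ∈ D(A^k) : A^k u ∈ Y}. Consequently D(𝔸^∞) = D(A^∞) × D(A^∞) × ∂X. -/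
/-- The iterated domain of the operator `T` with domain `D`:
`D(T¹) = D`, `D(T^{k+1}) = {u ∈ D(T^k) : T^k u ∈ D}` (and `D(T⁰)` is everything). -/
def iterDom {E : Type*} [AddCommGroup E] [Module ℂ E]
    (D : Set E) (T : E →ₗ[ℂ] E) : ℕ → Set E
  | 0 => Set.univ
  | k + 1 => {u ∈ iterDom D T k | (T ^ k) u ∈ D}

/-- The operator matrix `𝔸(u,v,x) = (v, Au, Lu)`. -/
noncomputable def matA {X bX : Type*} [AddCommGroup X] [Module ℂ X]
    [AddCommGroup bX] [Module ℂ bX] (A : X →ₗ[ℂ] X) (L : X →ₗ[ℂ] bX) :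
    (X × X × bX) →ₗ[ℂ] (X × X × bX) :=
  LinearMap.prod
    ((LinearMap.fst ℂ X bX).comp (LinearMap.snd ℂ X (X × bX)))
    (LinearMap.prod (A.comp (LinearMap.fst ℂ X (X × bX)))
      (L.comp (LinearMap.fst ℂ X (X × bX))))

lemma mem_iterDom_succ {E : Type*} [AddCommGroup E] [Module ℂ E]
    (D : Set E) (T : E →ₗ[ℂ] E) (k : ℕ) (u : E) :
    u ∈ iterDom D T (k+1) ↔ u ∈ iterDom D T k ∧ (T ^ k) u ∈ D := Iff.rfl

lemma mem_iterDom_zero {E : Type*} [AddCommGroup E] [Module ℂ E]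
    (D : Set E) (T : E →ₗ[ℂ] E) (u : E) : u ∈ iterDom D T 0 := trivial

section aux
variable {X bX : Type*} [AddCommGroup X] [Module ℂ X]
    [AddCommGroup bX] [Module ℂ bX] (A : X →ₗ[ℂ] X) (L : X →ₗ[ℂ] bX)

lemma matA_apply (w : X × X × bX) : matA A L w = (w.2.1, A w.1, L w.1) := rfl

lemma matA_even (i : ℕ) (w : X × X × bX) :
    ((matA A L ^ (2*i)) w).1 = (A ^ i) w.1 ∧ ((matA A L ^ (2*i)) w).2.1 = (A ^ i) w.2.1 := by
  induction i generalizing w with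
  | zero => simp
  | succ i ih =>
      have h2 : 2 * (i+1) = 2 * i + 2 := by ring
      rw [h2, pow_add]
      have : (matA A L ^ 2) w = (A w.1, A w.2.1, L w.2.1) := by
        rw [pow_two, Module.End.mul_apply, matA_apply, matA_apply]
      rw [Module.End.mul_apply, this]
      obtain ⟨e1, e2⟩ := ih (A w.1, A w.2.1, L w.2.1)
      constructor
      · rw [e1]; simp [pow_succ, Module.End.mul_apply]
      · rw [e2]; simp [pow_succ, Module.End.mul_apply]

lemma matA_odd (i : ℕ) (w : X × X × bX) :
    ((matA A L ^ (2*i+1)) w).1 = (A ^ i) w.2.1 ∧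
      ((matA A L ^ (2*i+1)) w).2.1 = (A ^ (i+1)) w.1 := by
  rw [pow_succ, Module.End.mul_apply, matA_apply]
  obtain ⟨e1, e2⟩ := matA_even A L i (w.2.1, A w.1, L w.1)
  exact ⟨e1, by rw [e2]; simp [pow_succ, Module.End.mul_apply]⟩

lemma iterDom_anti {E : Type*} [AddCommGroup E] [Module ℂ E]
    (D : Set E) (T : E →ₗ[ℂ] E) {m n : ℕ} (h : m ≤ n) :
    iterDom D T n ⊆ iterDom D T m := by
  induction n with
  | zero => interval_cases m; exact subset_rfl
  | succ n ih =>
      rcases Nat.lt_or_ge m (n+1) with h' | h'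
      · exact fun u hu => ih (Nat.lt_succ_iff.mp h') hu.1
      · have : m = n + 1 := le_antisymm h h'
        subst this; exact subset_rfl

end aux

/-- Lemma 3.5: the iterated domains of `𝔸(u,v,x) = (v, Au, Lu)` on `𝕏 = Y × X × ∂X`
(with `D(𝔸) = D(A) × Y × ∂X`) are
`D(𝔸^{2k-1}) = D(A^k) × D((A^{k-1})|_Y) × ∂X` and
`D(𝔸^{2k}) = D((A^k)|_Y) × D(A^k) × ∂X` for `k ≥ 1`; consequently
`D(𝔸^∞) = D(A^∞) × D(A^∞) × ∂X`. -/
theorem stmt4 {X bX : Type*} [AddCommGroup X] [Module ℂ X]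
    [AddCommGroup bX] [Module ℂ bX]
    (Y : Submodule ℂ X) (p : Submodule ℂ X) (hp : p ≤ Y)
    (A : X →ₗ[ℂ] X) (L : X →ₗ[ℂ] bX) :
    (∀ k : ℕ,
      iterDom {w : X × X × bX | w.1 ∈ p ∧ w.2.1 ∈ Y} (matA A L) (2 * k + 1) =
        {w : X × X × bX | w.1 ∈ iterDom (↑p) A (k + 1) ∧
          (w.2.1 ∈ iterDom (↑p) A k ∧ (A ^ k) w.2.1 ∈ Y)} ∧
      iterDom {w : X × X × bX | w.1 ∈ p ∧ w.2.1 ∈ Y} (matA A L) (2 * k + 2) =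
        {w : X × X × bX | (w.1 ∈ iterDom (↑p) A (k + 1) ∧ (A ^ (k + 1)) w.1 ∈ Y) ∧
          w.2.1 ∈ iterDom (↑p) A (k + 1)}) ∧
    (⋂ k : ℕ, iterDom {w : X × X × bX | w.1 ∈ p ∧ w.2.1 ∈ Y} (matA A L) k) =
      {w : X × X × bX | (∀ k : ℕ, w.1 ∈ iterDom (↑p) A k) ∧
        ∀ k : ℕ, w.2.1 ∈ iterDom (↑p) A k} := by
  set D : Set (X × X × bX) := {w : X × X × bX | w.1 ∈ p ∧ w.2.1 ∈ Y} with hD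
  have main : ∀ k : ℕ,
      iterDom D (matA A L) (2 * k + 1) =
        {w : X × X × bX | w.1 ∈ iterDom (↑p) A (k + 1) ∧
          (w.2.1 ∈ iterDom (↑p) A k ∧ (A ^ k) w.2.1 ∈ Y)} ∧
      iterDom D (matA A L) (2 * k + 2) =
        {w : X × X × bX | (w.1 ∈ iterDom (↑p) A (k + 1) ∧ (A ^ (k + 1)) w.1 ∈ Y) ∧
          w.2.1 ∈ iterDom (↑p) A (k + 1)} := by
    intro k
    induction k with
    | zero =>
        constructor
        · ext w
          show w ∈ iterDom D (matA A L) (0+1) ↔ _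
          rw [mem_iterDom_succ]
          simp [mem_iterDom_succ, mem_iterDom_zero, hD, Set.mem_setOf_eq]
        · ext w
          have ho := matA_odd A L 0 w
          simp only [Nat.mul_zero, Nat.zero_add, pow_zero, pow_one, Module.End.one_apply] at ho
          obtain ⟨ho1, ho2⟩ := ho
          show w ∈ iterDom D (matA A L) (0+1+1) ↔ _
          rw [mem_iterDom_succ, mem_iterDom_succ]
          simp only [mem_iterDom_zero, true_and, Set.mem_setOf_eq, hD,
            mem_iterDom_succ, pow_zero, pow_one, Module.End.one_apply]
          rw [ho1, ho2]
          constructor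
          · rintro ⟨⟨h1, -⟩, h3, h4⟩
            exact ⟨⟨h1, by simpa using h4⟩, h3⟩
          · rintro ⟨⟨h1, h4⟩, h3⟩
            exact ⟨⟨h1, hp h3⟩, h3, by simpa using h4⟩
    | succ k ih =>
        obtain ⟨ih1, ih2⟩ := ih
        have step1 : iterDom D (matA A L) (2 * (k+1) + 1) =
            {u ∈ iterDom D (matA A L) (2 * k + 2) | (matA A L ^ (2 * k + 2)) u ∈ D} := by
          have h : 2 * (k+1) + 1 = (2 * k + 2) + 1 := by ring
          rw [h]; rfl
        have step2 : iterDom D (matA A L) (2 * (k+1) + 2) =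
            {u ∈ iterDom D (matA A L) (2 * (k+1) + 1) | (matA A L ^ (2 * (k+1) + 1)) u ∈ D} :=
          rfl
        have hodd := matA_odd A L (k+1)
        have heven : ∀ w : X × X × bX, ((matA A L ^ (2*k+2)) w).1 = (A ^ (k+1)) w.1 ∧
            ((matA A L ^ (2*k+2)) w).2.1 = (A ^ (k+1)) w.2.1 := by
          intro w
          have h : 2 * k + 2 = 2 * (k+1) := by ring
          rw [h]; exact matA_even A L (k+1) w
        have c1 : iterDom D (matA A L) (2 * (k+1) + 1) =
            {w : X × X × bX | w.1 ∈ iterDom (↑p) A (k + 2) ∧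
              (w.2.1 ∈ iterDom (↑p) A (k+1) ∧ (A ^ (k+1)) w.2.1 ∈ Y)} := by
          rw [step1, ih2]
          ext w
          simp only [Set.mem_setOf_eq, hD, (heven w).1, (heven w).2,
            mem_iterDom_succ (↑p) A (k+1) w.1]
          constructor
          · rintro ⟨⟨⟨h1, h2⟩, h3⟩, h4, h5⟩
            exact ⟨⟨h1, h4⟩, h3, h5⟩
          · rintro ⟨⟨h1, h4⟩, h3, h5⟩
            exact ⟨⟨⟨h1, hp h4⟩, h3⟩, h4, h5⟩
        refine ⟨c1, ?_⟩
        rw [step2, c1]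
        ext w
        simp only [Set.mem_setOf_eq, hD, (hodd w).1, (hodd w).2,
          mem_iterDom_succ (↑p) A (k+1) w.2.1]
        constructor
        · rintro ⟨⟨h1, h2, h3⟩, h4, h5⟩
          exact ⟨⟨h1, h5⟩, h2, h4⟩
        · rintro ⟨⟨h1, h2⟩, h3, h4⟩
          exact ⟨⟨h1, h3, hp h4⟩, h4, h2⟩
  refine ⟨main, ?_⟩
  ext w
  simp only [Set.mem_iInter, Set.mem_setOf_eq]
  constructor
  · intro h
    constructor
    · intro k
      have hk := h (2 * k + 1)
      rw [(main k).1] at hk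
      exact iterDom_anti (↑p) A (Nat.le_succ k) hk.1
    · intro k
      have hk := h (2 * k + 1)
      rw [(main k).1] at hk
      exact hk.2.1
  · rintro ⟨h1, h2⟩ n
    have key : w ∈ iterDom D (matA A L) (2 * n + 1) := by
      rw [(main n).1]
      exact ⟨h1 (n+1), h2 n, hp (h2 (n+1)).2⟩
    exact iterDom_anti D (matA A L) (by omega) key
end

section
/- Let λ ∈ ρ(𝔸₀) (equivalently λ ≠ 0 and λ² ∈ ρ(A₀)). Then the Dirichlet operator D_λ^{𝔸,ℝ} : ∂X → ker(λ − 𝔸) associated with the matrix 𝔸(u,v,x) = (v, Au, Lu) and the boundary operator ℝ(u,v,x) = Ru exists and is given by D_λ^{𝔸,ℝ} y = (D_{λ²}^{A,R} y, λ D_{λ²}^{A,R} y, λ⁻¹ L D_{λ²}^{A,R} y). -/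
/-- Lemma 3.8: for `λ ∈ ρ(𝔸₀)` (so `λ ≠ 0`, `λ² ∈ ρ(A₀)`), the Dirichlet operator
associated with the matrix `𝔸(u,v,x) = (v, Au, Lu)` and `ℝ(u,v,x) = Ru` exists and is
`D_λ^{𝔸,ℝ} y = (D_{λ²}^{A,R} y, λ D_{λ²}^{A,R} y, λ⁻¹ L D_{λ²}^{A,R} y)`:
for every `y ∈ ∂X`, the triple `(u, λu, λ⁻¹ L u)` with `u = D_{λ²}^{A,R} y` is the
unique element `(w₁,w₂,w₃)` of `D(𝔸) = D(A) × Y × ∂X` satisfying `𝔸w = λw` and `R w₁ = y`. -/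
theorem stmt5 {Y X bX : Type*} [NormedAddCommGroup Y] [NormedAddCommGroup X]
    [NormedAddCommGroup bX] [NormedSpace ℂ Y] [NormedSpace ℂ X] [NormedSpace ℂ bX]
    [CompleteSpace Y] [CompleteSpace X] [CompleteSpace bX]
    (i : Y →L[ℂ] X) (hi : Function.Injective i)
    (q : Submodule ℂ Y) (A : Y →ₗ[ℂ] X) (R L : Y →ₗ[ℂ] bX) (B₂ : Y →L[ℂ] bX)
    (hL : ∀ u ∈ q, L u = R u + B₂ u)
    (lam : ℂ) (hlam : lam ≠ 0)
    (hbij : ∀ y' : bX, ∃! u : Y, u ∈ q ∧ A u = (lam ^ 2) • i u ∧ R u = y')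
    (y : bX) (u : Y)
    (hu : u ∈ q) (hAu : A u = (lam ^ 2) • i u) (hRu : R u = y) :
    (∃! w : Y × Y × bX, w.1 ∈ q ∧
        w.2.1 = lam • w.1 ∧ A w.1 = lam • i w.2.1 ∧ L w.1 = lam • w.2.2 ∧
        R w.1 = y) ∧
    ∀ w : Y × Y × bX, (w.1 ∈ q ∧
        w.2.1 = lam • w.1 ∧ A w.1 = lam • i w.2.1 ∧ L w.1 = lam • w.2.2 ∧
        R w.1 = y) → w = (u, lam • u, lam⁻¹ • L u) := by
  have key : ∀ w : Y × Y × bX, (w.1 ∈ q ∧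
      w.2.1 = lam • w.1 ∧ A w.1 = lam • i w.2.1 ∧ L w.1 = lam • w.2.2 ∧
      R w.1 = y) → w = (u, lam • u, lam⁻¹ • L u) := by
    rintro ⟨w1, w2, w3⟩ ⟨hq, h21, hA, hLw, hR⟩
    simp only at *
    have hA' : A w1 = (lam ^ 2) • i w1 := by
      rw [hA, h21, map_smul, smul_smul, sq]
    have h1 : w1 = u := by
      have := hbij y
      exact ((this.unique ⟨hq, hA', hR⟩ ⟨hu, hAu, hRu⟩))
    subst h1
    have h3 : w3 = lam⁻¹ • L w1 := by
      rw [hLw, smul_smul, inv_mul_cancel₀ hlam, one_smul]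
    simp [h21, h3]
  have hcand : ((u, lam • u, lam⁻¹ • L u) : Y × Y × bX).1 ∈ q ∧
      ((u, lam • u, lam⁻¹ • L u) : Y × Y × bX).2.1 = lam • u ∧
      A u = lam • i (lam • u) ∧ L u = lam • (lam⁻¹ • L u) ∧ R u = y := by
    refine ⟨hu, rfl, ?_, ?_, hRu⟩
    · rw [map_smul, smul_smul, ← sq, hAu]
    · rw [smul_smul, mul_inv_cancel₀ hlam, one_smul]
  exact ⟨⟨_, hcand, fun w hw => (key w hw).trans rfl⟩, key⟩
end

section
/- Let 𝒜 be the operator on 𝒳 = 𝕏 × ∂𝕏 given by the matrix (𝔸, 0; 𝔹, 𝔹̃) with domain D(𝒜) = {(𝕦,𝕩) ∈ D(𝔸) × ∂𝕏 : ℝ𝕦 = 𝕩}, where 𝔹 : 𝕏 → ∂𝕏 and 𝔹̃ : ∂𝕏 → ∂𝕏 are bounded, ℝ : D(𝔸) → ∂𝕏 is surjective, 𝔸₀ = 𝔸|_{ker ℝ} has nonempty resolvent set, and for λ ∈ ρ(𝔸₀) the Dirichlet operator D_λ = D_λ^{𝔸,ℝ} exists and is bounded from ∂𝕏 to 𝕏.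 Then for every λ ∈ ρ(𝔸₀) the factorization λ − 𝒜 = ℒ_λ 𝒜_λ ℳ_λ holds, where ℒ_λ = (I, 0; −𝔹R(λ,𝔸₀), I), 𝒜_λ = diag(λ − 𝔸₀, λ − 𝔹_λ) with 𝔹_λ := 𝔹̃ + 𝔹 D_λ, and ℳ_λ = (I, −D_λ; 0, I); equality includes equality of domains: (𝕦,𝕩) ∈ D(𝒜) iff 𝕦 − D_λ𝕩 ∈ D(𝔸₀) and 𝕩 ∈ ∂𝕏. -/
/-- Lemma 3.10, eq. (3.6): for `λ ∈ ρ(𝔸₀)` the factorization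
`λ − 𝒜 = ℒ_λ 𝒜_λ ℳ_λ` holds, including equality of domains:
`(𝕦,𝕩) ∈ D(𝒜)` iff `𝕦 − D_λ 𝕩 ∈ D(𝔸₀)`.  Here `𝒜 = (𝔸, 0; 𝔹, 𝔹̃)` with coupled
domain `{(𝕦,𝕩) : 𝕦 ∈ D(𝔸), ℝ𝕦 = 𝕩}`, `ℒ_λ = (I, 0; −𝔹R(λ,𝔸₀), I)`,
`𝒜_λ = diag(λ−𝔸₀, λ−𝔹_λ)` with `𝔹_λ = 𝔹̃ + 𝔹D_λ`, and `ℳ_λ = (I, −D_λ; 0, I)`. -/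
theorem stmt7 {XX bX : Type*} [NormedAddCommGroup XX] [NormedAddCommGroup bX]
    [NormedSpace ℂ XX] [NormedSpace ℂ bX] [CompleteSpace XX] [CompleteSpace bX]
    (p : Submodule ℂ XX) (Aop : XX →ₗ[ℂ] XX) (Rop : XX →ₗ[ℂ] bX)
    (hRsurj : ∀ x : bX, ∃ u, u ∈ p ∧ Rop u = x)
    (Bop : XX →L[ℂ] bX) (Bt : bX →L[ℂ] bX) (lam : ℂ)
    -- `lam ∈ ρ(𝔸₀)`: bounded two-sided resolvent of `𝔸₀ = 𝔸|_{ker ℝ}`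
    (Rres : XX →L[ℂ] XX)
    (hR1 : ∀ w : XX, Rres w ∈ p ∧ Rop (Rres w) = 0 ∧ lam • Rres w - Aop (Rres w) = w)
    (hR2 : ∀ u ∈ p, Rop u = 0 → Rres (lam • u - Aop u) = u)
    -- the Dirichlet operator `D_λ : ∂𝕏 → ker(λ − 𝔸)`, bounded, inverse of `ℝ|_{ker(λ−𝔸)}`
    (Dlam : bX →L[ℂ] XX)
    (hD1 : ∀ x : bX, Dlam x ∈ p ∧ Aop (Dlam x) = lam • Dlam x ∧ Rop (Dlam x) = x)
    (hD2 : ∀ u ∈ p, Aop u = lam • u → Dlam (Rop u) = u) :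
    -- equality of domains
    (∀ (u : XX) (x : bX),
      (u ∈ p ∧ Rop u = x) ↔ (u - Dlam x ∈ p ∧ Rop (u - Dlam x) = 0)) ∧
    -- equality of the actions `ℒ_λ(𝒜_λ(ℳ_λ(𝕦,𝕩))) = (λ−𝒜)(𝕦,𝕩)` on `D(𝒜)`
    (∀ (u : XX) (x : bX), u ∈ p → Rop u = x →
      (lam • (u - Dlam x) - Aop (u - Dlam x),
       (lam • x - (Bt x + Bop (Dlam x))) -
         Bop (Rres (lam • (u - Dlam x) - Aop (u - Dlam x))))
      = (lam • u - Aop u, lam • x - (Bop u + Bt x))) := by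
  constructor
  · intro u x
    obtain ⟨hp, hA, hRD⟩ := hD1 x
    constructor
    · rintro ⟨hu, rfl⟩
      exact ⟨p.sub_mem hu hp, by simp [map_sub, hRD]⟩
    · rintro ⟨hs, h0⟩
      have hu : u ∈ p := by simpa using p.add_mem hs hp
      refine ⟨hu, ?_⟩
      have := h0
      rw [map_sub, hRD, sub_eq_zero] at this
      exact this
  · intro u x hu hx
    obtain ⟨hp, hA, hRD⟩ := hD1 x
    have hv : u - Dlam x ∈ p := p.sub_mem hu hp
    have hv0 : Rop (u - Dlam x) = 0 := by simp [map_sub, hRD, hx]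
    have hres : Rres (lam • (u - Dlam x) - Aop (u - Dlam x)) = u - Dlam x :=
      hR2 _ hv hv0
    rw [Prod.mk.injEq]
    constructor
    · simp [map_sub, smul_sub, hA]
    · rw [hres, map_sub]; abel
end

section
/- With the factorization λ − 𝒜 = ℒ_λ 𝒜_λ ℳ_λ for λ ∈ ρ(𝔸₀), where ℒ_λ and ℳ_λ are bounded and boundedly invertible (indeed ℒ_λ⁻¹ = (I, 0; 𝔹R(λ,𝔸₀), I) and ℳ_λ⁻¹ = (I, D_λ; 0, I)), the following equivalences hold: λ ∈ σ(𝒜) if and only if λ ∈ σ(𝔹_λ), and λ ∈ Pσ(𝒜) (point spectrum) if and only if λ ∈ Pσ(𝔹_λ). -/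
/-- `S` is a bounded two-sided resolvent at `lam` of the coupled operator
`𝒜(𝕦,𝕩) = (𝔸𝕦, 𝔹𝕦 + 𝔹̃𝕩)` with domain `{(𝕦,𝕩) : 𝕦 ∈ D(𝔸), ℝ𝕦 = 𝕩}`. -/
def IsResolventOfCalA {XX bX : Type*} [NormedAddCommGroup XX] [NormedAddCommGroup bX]
    [NormedSpace ℂ XX] [NormedSpace ℂ bX]
    (p : Submodule ℂ XX) (Aop : XX →ₗ[ℂ] XX) (Rop : XX →ₗ[ℂ] bX)
    (Bop : XX →L[ℂ] bX) (Bt : bX →L[ℂ] bX) (lam : ℂ)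
    (S : (XX × bX) →L[ℂ] (XX × bX)) : Prop :=
  (∀ w : XX × bX, (S w).1 ∈ p ∧ Rop (S w).1 = (S w).2 ∧
    (lam • (S w).1 - Aop (S w).1,
     lam • (S w).2 - (Bop (S w).1 + Bt (S w).2)) = w) ∧
  ∀ (u : XX) (x : bX), u ∈ p → Rop u = x →
    S (lam • u - Aop u, lam • x - (Bop u + Bt x)) = (u, x)

/-- Proposition 3.11, eq. (3.9): for `λ ∈ ρ(𝔸₀)`,
`λ ∈ σ(𝒜) ⟺ λ ∈ σ(𝔹_λ)` and `λ ∈ Pσ(𝒜) ⟺ λ ∈ Pσ(𝔹_λ)`,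
where `𝔹_λ = 𝔹̃ + 𝔹 D_λ` is a bounded operator on `∂𝕏`. -/
theorem stmt9 {XX bX : Type*} [NormedAddCommGroup XX] [NormedAddCommGroup bX]
    [NormedSpace ℂ XX] [NormedSpace ℂ bX] [CompleteSpace XX] [CompleteSpace bX]
    (p : Submodule ℂ XX) (Aop : XX →ₗ[ℂ] XX) (Rop : XX →ₗ[ℂ] bX)
    (hRsurj : ∀ x : bX, ∃ u, u ∈ p ∧ Rop u = x)
    (Bop : XX →L[ℂ] bX) (Bt : bX →L[ℂ] bX) (lam : ℂ)
    (Rres : XX →L[ℂ] XX)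
    (hR1 : ∀ w : XX, Rres w ∈ p ∧ Rop (Rres w) = 0 ∧ lam • Rres w - Aop (Rres w) = w)
    (hR2 : ∀ u ∈ p, Rop u = 0 → Rres (lam • u - Aop u) = u)
    (Dlam : bX →L[ℂ] XX)
    (hD1 : ∀ x : bX, Dlam x ∈ p ∧ Aop (Dlam x) = lam • Dlam x ∧ Rop (Dlam x) = x)
    (hD2 : ∀ u ∈ p, Aop u = lam • u → Dlam (Rop u) = u) :
    -- `λ ∈ σ(𝒜) ⟺ λ ∈ σ(𝔹_λ)`
    ((¬ ∃ S, IsResolventOfCalA p Aop Rop Bop Bt lam S) ↔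
      lam ∈ spectrum ℂ (Bt + Bop.comp Dlam)) ∧
    -- `λ ∈ Pσ(𝒜) ⟺ λ ∈ Pσ(𝔹_λ)`
    ((∃ (u : XX) (x : bX), u ∈ p ∧ Rop u = x ∧ (u, x) ≠ (0 : XX × bX) ∧
        Aop u = lam • u ∧ Bop u + Bt x = lam • x) ↔
      ∃ y : bX, y ≠ 0 ∧ (Bt + Bop.comp Dlam) y = lam • y) := by
  constructor
  · rw [spectrum.mem_iff]
    apply not_congr
    constructor
    · rintro ⟨S, hS1, hS2⟩
      rw [isUnit_iff_exists]
      refine ⟨(ContinuousLinearMap.snd ℂ XX bX).comp (S.comp (ContinuousLinearMap.inr ℂ XX bX)),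
        ?_, ?_⟩
      · ext y
        obtain ⟨hup, hRu, heq⟩ := hS1 (0, y)
        have hA : Aop (S (0, y)).1 = lam • (S (0, y)).1 := by
          have := congrArg Prod.fst heq
          simp only at this
          have h0 : lam • (S (0, y)).1 - Aop (S (0, y)).1 = 0 := this
          linear_combination (norm := module) -h0
        have hu : Dlam (S (0, y)).2 = (S (0, y)).1 := by
          rw [← hRu]; exact hD2 _ hup hA
        have h2 : lam • (S (0, y)).2 - (Bop (S (0, y)).1 + Bt (S (0, y)).2) = y := by
          have := congrArg Prod.snd heq
          simpa using this
        simp only [ContinuousLinearMap.mul_apply, ContinuousLinearMap.sub_apply,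
          Algebra.algebraMap_eq_smul_one, ContinuousLinearMap.smul_apply,
          ContinuousLinearMap.one_apply, ContinuousLinearMap.coe_comp', Function.comp_apply,
          ContinuousLinearMap.coe_snd', ContinuousLinearMap.inr_apply,
          ContinuousLinearMap.add_apply]
        rw [hu, add_comm]
        exact h2
      · ext y
        obtain ⟨hmem, hA, hR⟩ := hD1 y
        have key := hS2 (Dlam y) y hmem hR
        have h0 : lam • Dlam y - Aop (Dlam y) = 0 := by rw [hA]; abel
        rw [h0] at key
        simp only [ContinuousLinearMap.mul_apply, ContinuousLinearMap.sub_apply,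
          Algebra.algebraMap_eq_smul_one, ContinuousLinearMap.smul_apply,
          ContinuousLinearMap.one_apply, ContinuousLinearMap.coe_comp', Function.comp_apply,
          ContinuousLinearMap.coe_snd', ContinuousLinearMap.inr_apply,
          ContinuousLinearMap.add_apply]
        rw [show lam • y - (Bt y + Bop (Dlam y)) = lam • y - (Bop (Dlam y) + Bt y) by abel, key]
    · intro h
      rw [isUnit_iff_exists] at h
      obtain ⟨T, h1, h2⟩ := h
      have hT1 : ∀ y : bX, lam • T y - (Bt (T y) + Bop (Dlam (T y))) = y := by
        intro y
        have := congrFun (congrArg DFunLike.coe h1) y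
        simpa [Algebra.algebraMap_eq_smul_one, ContinuousLinearMap.mul_apply,
          ContinuousLinearMap.sub_apply, ContinuousLinearMap.smul_apply,
          ContinuousLinearMap.add_apply] using this
      have hT2 : ∀ y : bX, T (lam • y - (Bt y + Bop (Dlam y))) = y := by
        intro y
        have := congrFun (congrArg DFunLike.coe h2) y
        simpa [Algebra.algebraMap_eq_smul_one, ContinuousLinearMap.mul_apply,
          ContinuousLinearMap.sub_apply, ContinuousLinearMap.smul_apply,
          ContinuousLinearMap.add_apply] using this
      set Xc : (XX × bX) →L[ℂ] bX :=
        T.comp (ContinuousLinearMap.snd ℂ XX bX +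
          Bop.comp (Rres.comp (ContinuousLinearMap.fst ℂ XX bX))) with hXc
      refine ⟨((Rres.comp (ContinuousLinearMap.fst ℂ XX bX)) + Dlam.comp Xc).prod Xc, ?_, ?_⟩
      · rintro ⟨f, g⟩
        have hXv : Xc (f, g) = T (g + Bop (Rres f)) := by
          simp [hXc]
        obtain ⟨hRf, hRRf, hlf⟩ := hR1 f
        obtain ⟨hDm, hDA, hDR⟩ := hD1 (Xc (f, g))
        refine ⟨?_, ?_, ?_⟩
        · simpa using p.add_mem hRf hDm
        · simp only [ContinuousLinearMap.prod_apply, ContinuousLinearMap.add_apply,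
            ContinuousLinearMap.coe_comp', Function.comp_apply, ContinuousLinearMap.coe_fst',
            map_add, hRRf]
          simpa using hDR
        · simp only [ContinuousLinearMap.prod_apply, ContinuousLinearMap.add_apply,
            ContinuousLinearMap.coe_comp', Function.comp_apply, ContinuousLinearMap.coe_fst',
            map_add, smul_add, Prod.mk.injEq]
          constructor
          · rw [show lam • Rres f + lam • Dlam (Xc (f, g)) -
                (Aop (Rres f) + Aop (Dlam (Xc (f, g)))) =
                (lam • Rres f - Aop (Rres f)) + (lam • Dlam (Xc (f, g)) - Aop (Dlam (Xc (f, g))))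
                by abel, hlf, hDA]
            simp
          · rw [hXv]
            have := hT1 (g + Bop (Rres f))
            have hTT : Dlam (T (g + Bop (Rres f))) = Dlam (Xc (f,g)) := by rw [hXv]
            rw [← hXv] at this ⊢
            linear_combination (norm := module) this
      · intro u x hup hRux
        have hu0m : u - Dlam x ∈ p := p.sub_mem hup (hD1 x).1
        have hu0R : Rop (u - Dlam x) = 0 := by
          rw [map_sub, hRux, (hD1 x).2.2, sub_self]
        have hRr : Rres (lam • (u - Dlam x) - Aop (u - Dlam x)) = u - Dlam x :=
          hR2 _ hu0m hu0R
        have hsimp : lam • (u - Dlam x) - Aop (u - Dlam x) = lam • u - Aop u := by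
          simp only [smul_sub, map_sub, (hD1 x).2.1]
          abel
        rw [hsimp] at hRr
        have hXval : Xc (lam • u - Aop u, lam • x - (Bop u + Bt x)) = x := by
          simp only [hXc, ContinuousLinearMap.coe_comp', Function.comp_apply,
            ContinuousLinearMap.add_apply, ContinuousLinearMap.coe_snd',
            ContinuousLinearMap.coe_fst', hRr]
          rw [show lam • x - (Bop u + Bt x) + Bop (u - Dlam x)
              = lam • x - (Bt x + Bop (Dlam x)) by
            rw [map_sub]; abel]
          exact hT2 x
        ext
        · simp only [ContinuousLinearMap.prod_apply, ContinuousLinearMap.add_apply,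
            ContinuousLinearMap.coe_comp', Function.comp_apply, ContinuousLinearMap.coe_fst',
            hRr, hXval]
          abel
        · simpa using hXval
  · constructor
    · rintro ⟨u, x, hup, hRu, hne, hAu, hBu⟩
      have hu : Dlam x = u := by rw [← hRu]; exact hD2 u hup hAu
      have hx : x ≠ 0 := by
        rintro rfl
        apply hne
        have : u = 0 := by rw [← hu, map_zero]
        simp [this]
      refine ⟨x, hx, ?_⟩
      simp only [ContinuousLinearMap.add_apply, ContinuousLinearMap.comp_apply, hu]
      rw [add_comm]; exact hBu
    · rintro ⟨y, hy, hBy⟩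
      obtain ⟨hmem, hA, hR⟩ := hD1 y
      refine ⟨Dlam y, y, hmem, hR, ?_, hA, ?_⟩
      · simp [Prod.ext_iff, hy]
      · simpa only [ContinuousLinearMap.add_apply, ContinuousLinearMap.comp_apply, add_comm] using hBy
end

section
/- In the setting of the previous statement, if λ ∈ ρ(𝔸₀) ∩ ρ(𝔹_λ), then λ ∈ ρ(𝒜) and the resolvent of 𝒜 is given by the block matrix R(λ,𝒜) = (R(λ,𝔸₀) + D_λ R(λ,𝔹_λ) 𝔹 R(λ,𝔸₀), D_λ R(λ,𝔹_λ); R(λ,𝔹_λ) 𝔹 R(λ,𝔸₀), R(λ,𝔹_λ)). -/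
/-- Proposition 3.11, eq. (3.10): if `λ ∈ ρ(𝔸₀) ∩ ρ(𝔹_λ)` then `λ ∈ ρ(𝒜)` and
`R(λ,𝒜) = (R(λ,𝔸₀) + D_λ R(λ,𝔹_λ) 𝔹 R(λ,𝔸₀), D_λ R(λ,𝔹_λ);
R(λ,𝔹_λ) 𝔹 R(λ,𝔸₀), R(λ,𝔹_λ))`. -/
theorem stmt10 {XX bX : Type*} [NormedAddCommGroup XX] [NormedAddCommGroup bX]
    [NormedSpace ℂ XX] [NormedSpace ℂ bX] [CompleteSpace XX] [CompleteSpace bX]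
    (p : Submodule ℂ XX) (Aop : XX →ₗ[ℂ] XX) (Rop : XX →ₗ[ℂ] bX)
    (Bop : XX →L[ℂ] bX) (Bt : bX →L[ℂ] bX) (lam : ℂ)
    (Rres : XX →L[ℂ] XX)
    (hR1 : ∀ w : XX, Rres w ∈ p ∧ Rop (Rres w) = 0 ∧ lam • Rres w - Aop (Rres w) = w)
    (hR2 : ∀ u ∈ p, Rop u = 0 → Rres (lam • u - Aop u) = u)
    (Dlam : bX →L[ℂ] XX)
    (hD1 : ∀ x : bX, Dlam x ∈ p ∧ Aop (Dlam x) = lam • Dlam x ∧ Rop (Dlam x) = x)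
    (hD2 : ∀ u ∈ p, Aop u = lam • u → Dlam (Rop u) = u)
    -- `lam ∈ ρ(𝔹_λ)`: a two-sided resolvent `SB = R(λ,𝔹_λ)` of `𝔹_λ = 𝔹̃ + 𝔹D_λ`
    (SB : bX →L[ℂ] bX)
    (hSB1 : ∀ y : bX, lam • SB y - (Bt + Bop.comp Dlam) (SB y) = y)
    (hSB2 : ∀ y : bX, SB (lam • y - (Bt + Bop.comp Dlam) y) = y) :
    -- the claimed block operator is a two-sided resolvent of `𝒜` at `lam`:
    (∀ (f : XX) (g : bX),
      (Rres f + Dlam (SB (Bop (Rres f))) + Dlam (SB g)) ∈ p ∧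
      Rop (Rres f + Dlam (SB (Bop (Rres f))) + Dlam (SB g))
        = SB (Bop (Rres f)) + SB g ∧
      lam • (Rres f + Dlam (SB (Bop (Rres f))) + Dlam (SB g)) -
        Aop (Rres f + Dlam (SB (Bop (Rres f))) + Dlam (SB g)) = f ∧
      lam • (SB (Bop (Rres f)) + SB g) -
        (Bop (Rres f + Dlam (SB (Bop (Rres f))) + Dlam (SB g)) +
          Bt (SB (Bop (Rres f)) + SB g)) = g) ∧
    (∀ (u : XX) (x : bX), u ∈ p → Rop u = x →
      Rres (lam • u - Aop u) +
        Dlam (SB (Bop (Rres (lam • u - Aop u)))) +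
        Dlam (SB (lam • x - (Bop u + Bt x))) = u ∧
      SB (Bop (Rres (lam • u - Aop u))) + SB (lam • x - (Bop u + Bt x)) = x) := by

  constructor
  · intro f g
    obtain ⟨hfp, hf0, hfe⟩ := hR1 f
    obtain ⟨h1p, h1e, h1r⟩ := hD1 (SB (Bop (Rres f)))
    obtain ⟨h2p, h2e, h2r⟩ := hD1 (SB g)
    have e1 : lam • SB (Bop (Rres f)) - (Bt (SB (Bop (Rres f))) +
        Bop (Dlam (SB (Bop (Rres f))))) = Bop (Rres f) := by
      simpa using hSB1 (Bop (Rres f))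
    have e2 : lam • SB g - (Bt (SB g) + Bop (Dlam (SB g))) = g := by
      simpa using hSB1 g
    refine ⟨p.add_mem (p.add_mem hfp h1p) h2p, ?_, ?_, ?_⟩
    · simp [map_add, hf0, h1r, h2r]
    · have h : lam • (Rres f + Dlam (SB (Bop (Rres f))) + Dlam (SB g)) -
          Aop (Rres f + Dlam (SB (Bop (Rres f))) + Dlam (SB g)) =
          (lam • Rres f - Aop (Rres f)) +
          (lam • Dlam (SB (Bop (Rres f))) - Aop (Dlam (SB (Bop (Rres f))))) +
          (lam • Dlam (SB g) - Aop (Dlam (SB g))) := by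
        simp only [map_add, smul_add]; abel
      rw [h, hfe, h1e, h2e]; abel
    · have h : lam • (SB (Bop (Rres f)) + SB g) -
          (Bop (Rres f + Dlam (SB (Bop (Rres f))) + Dlam (SB g)) +
            Bt (SB (Bop (Rres f)) + SB g)) =
          (lam • SB (Bop (Rres f)) - (Bt (SB (Bop (Rres f))) +
            Bop (Dlam (SB (Bop (Rres f)))))) +
          (lam • SB g - (Bt (SB g) + Bop (Dlam (SB g)))) - Bop (Rres f) := by
        simp only [map_add, smul_add]; abel
      rw [h, e1, e2]; abel
  · intro u x hu hx
    set u0 := u - Dlam x with hu0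
    obtain ⟨hDp, hDe, hDr⟩ := hD1 x
    have hu0p : u0 ∈ p := p.sub_mem hu hDp
    have hu0r : Rop u0 = 0 := by simp [hu0, map_sub, hx, hDr]
    have key : lam • u - Aop u = lam • u0 - Aop u0 := by
      simp only [hu0, map_sub, smul_sub, hDe]; abel
    have hRu : Rres (lam • u - Aop u) = u0 := by
      rw [key]; exact hR2 u0 hu0p hu0r
    have hBu0 : Bop u0 = Bop u - Bop (Dlam x) := by simp [hu0]
    have hsum : SB (Bop (Rres (lam • u - Aop u))) + SB (lam • x - (Bop u + Bt x)) = x := by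
      rw [hRu, ← map_add]
      have harg : Bop u0 + (lam • x - (Bop u + Bt x)) =
          lam • x - (Bt + Bop.comp Dlam) x := by
        simp only [hBu0, ContinuousLinearMap.add_apply, ContinuousLinearMap.comp_apply]
        abel
      rw [harg, hSB2]
    refine ⟨?_, hsum⟩
    have : Dlam (SB (Bop (Rres (lam • u - Aop u)))) + Dlam (SB (lam • x - (Bop u + Bt x)))
        = Dlam x := by rw [← map_add, hsum]
    rw [hRu] at this ⊢
    rw [add_assoc, this, hu0]; abel
end

section
/- Let B₃ = 0 and B₁ = −B₄B₂, and suppose {λ ∈ Pσ(B₄) : λ² ∈ σ(A₀)} = ∅. Then the point spectrum of 𝒜 is exactly Pσ(𝒜) = {λ ∈ ℂ : λ² ∈ Pσ(A₀) or λ ∈ Pσ(B₄)}. -/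
/-- Corollary 4.4: let `B₃ = 0` and `B₁ = −B₄B₂`, and assume
`{λ ∈ Pσ(B₄) : λ² ∈ σ(A₀)} = ∅` (condition (4.4), stated as: every eigenvalue `λ` of
`B₄` has `λ² ∈ ρ(A₀)`).  Then
`Pσ(𝒜) = {λ ∈ ℂ : λ² ∈ Pσ(A₀) or λ ∈ Pσ(B₄)}`. -/
theorem stmt18 {Y X bX : Type*} [NormedAddCommGroup Y] [NormedAddCommGroup X]
    [NormedAddCommGroup bX] [NormedSpace ℂ Y] [NormedSpace ℂ X] [NormedSpace ℂ bX]
    [CompleteSpace Y] [CompleteSpace X] [CompleteSpace bX]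
    (i : Y →L[ℂ] X) (hi : Function.Injective i)
    (q : Submodule ℂ Y) (A : Y →ₗ[ℂ] X) (R L : Y →ₗ[ℂ] bX)
    (B₁ : Y →ₗ[ℂ] bX) (B₂ : Y →L[ℂ] bX) (B₄ : bX →L[ℂ] bX)
    (hL : ∀ u ∈ q, L u = R u + B₂ u)
    (hB₁ : ∀ u : Y, B₁ u = -B₄ (B₂ u))
    (hRsurj : ∀ y : bX, ∃ u, u ∈ q ∧ R u = y)
    -- condition (4.4): every eigenvalue `λ` of `B₄` satisfies `λ² ∈ ρ(A₀)`
    (h44 : ∀ lam : ℂ, (∃ y : bX, y ≠ 0 ∧ B₄ y = lam • y) →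
      ∃ Rr : X →L[ℂ] Y,
        (∀ w : X, Rr w ∈ q ∧ R (Rr w) = 0 ∧
          (lam ^ 2) • i (Rr w) - A (Rr w) = w) ∧
        ∀ u ∈ q, R u = 0 → Rr ((lam ^ 2) • i u - A u) = u) :
    ∀ lam : ℂ,
      -- `λ ∈ Pσ(𝒜)` ...
      (∃ (u v : Y) (y : bX), u ∈ q ∧ R u = y ∧ (u, v, y) ≠ (0 : Y × Y × bX) ∧
          v = lam • u ∧ A u = lam • i v ∧ B₁ u + B₄ (B₂ u) + B₄ y = lam • y) ↔
      -- ... iff `λ² ∈ Pσ(A₀)` or `λ ∈ Pσ(B₄)`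
      ((∃ u : Y, u ∈ q ∧ R u = 0 ∧ u ≠ 0 ∧ A u = (lam ^ 2) • i u) ∨
        (∃ y : bX, y ≠ 0 ∧ B₄ y = lam • y)) := by
  intro lam
  constructor
  · rintro ⟨u, v, y, hq, hR, hne, hv, hA, hB⟩
    rw [hB₁ u] at hB
    simp only [neg_add_cancel, zero_add] at hB
    by_cases hy : y = 0
    · left
      refine ⟨u, hq, by rw [hR, hy], ?_, ?_⟩
      · rintro rfl
        apply hne
        simp [hv, hy]
      · rw [hA, hv, map_smul, smul_smul, sq]
    · right
      exact ⟨y, hy, hB⟩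
  · rintro (⟨u, hq, hR, hu, hA⟩ | hev)
    · refine ⟨u, lam • u, 0, hq, hR, ?_, rfl, ?_, ?_⟩
      · simp [Prod.ext_iff, hu]
      · rw [hA, map_smul, smul_smul, sq]
      · rw [hB₁ u]; simp
    · obtain ⟨y, hy, hBy⟩ := hev
      obtain ⟨Rr, hRr, -⟩ := h44 lam ⟨y, hy, hBy⟩
      obtain ⟨w, hwq, hwR⟩ := hRsurj y
      set c := Rr ((lam ^ 2) • i w - A w) with hc
      obtain ⟨hcq, hcR, hceq⟩ := hRr ((lam ^ 2) • i w - A w)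
      refine ⟨w - c, lam • (w - c), y, q.sub_mem hwq hcq, ?_, ?_, rfl, ?_, ?_⟩
      · rw [map_sub, hwR, hc, hcR, sub_zero]
      · simp [Prod.ext_iff, hy]
      · have : A (w - c) = (lam ^ 2) • i (w - c) := by
          have := hceq
          rw [← hc] at this
          have h2 : (lam ^ 2) • i (w - c) - A (w - c) = 0 := by
            rw [map_sub, map_sub, smul_sub, sub_sub_sub_comm, this, sub_self]
          exact (sub_eq_zero.mp h2).symm
        rw [this, map_smul, smul_smul, sq]
      · rw [hB₁ (w - c)]; simpa using hBy
end

section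
/- Let λ ∈ ρ(A₀) with λ² ∈ ρ(A₀), λ ≠ 0, B₃ = 0, B₁ = −B₄B₂, and λ ∈ ρ(B₄). Then λ ∈ ρ(𝒜) and R(λ,𝒜) is the block operator (λR(λ²,A₀), R(λ²,A₀), D_{λ²}^{A,R}R(λ,B₄); A₀R(λ²,A₀), λR(λ²,A₀), λD_{λ²}^{A,R}R(λ,B₄); 0, 0, R(λ,B₄)) on Y × X × ∂X. -/
/-- Corollary 4.3(i), resolvent formula: let `B₃ = 0`, `B₁ = −B₄B₂`, `λ ∈ ρ(A₀)` with
`λ² ∈ ρ(A₀)`, `λ ≠ 0`, and `λ ∈ ρ(B₄)`.  Then `λ ∈ ρ(𝒜)` and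
`R(λ,𝒜) = (λR(λ²,A₀), R(λ²,A₀), D_{λ²}R(λ,B₄);
           A₀R(λ²,A₀), λR(λ²,A₀), λD_{λ²}R(λ,B₄); 0, 0, R(λ,B₄))`
on `Y × X × ∂X`, i.e. the displayed block operator is a two-sided inverse of `λ − 𝒜`. -/
theorem stmt19 {Y X bX : Type*} [NormedAddCommGroup Y] [NormedAddCommGroup X]
    [NormedAddCommGroup bX] [NormedSpace ℂ Y] [NormedSpace ℂ X] [NormedSpace ℂ bX]
    [CompleteSpace Y] [CompleteSpace X] [CompleteSpace bX]
    (i : Y →L[ℂ] X) (hi : Function.Injective i)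
    (q : Submodule ℂ Y) (A : Y →ₗ[ℂ] X) (R L : Y →ₗ[ℂ] bX)
    (B₁ : Y →ₗ[ℂ] bX) (B₂ : Y →L[ℂ] bX) (B₄ : bX →L[ℂ] bX)
    (hL : ∀ u ∈ q, L u = R u + B₂ u)
    (hB₁ : ∀ u : Y, B₁ u = -B₄ (B₂ u))
    (lam : ℂ) (hlam : lam ≠ 0)
    -- `λ ∈ ρ(A₀)`
    (Rr1 : X →L[ℂ] Y)
    (hRr1a : ∀ w : X, Rr1 w ∈ q ∧ R (Rr1 w) = 0 ∧ lam • i (Rr1 w) - A (Rr1 w) = w)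
    (hRr1b : ∀ u ∈ q, R u = 0 → Rr1 (lam • i u - A u) = u)
    -- `λ² ∈ ρ(A₀)`: `Rr = R(λ²,A₀)`
    (Rr : X →L[ℂ] Y)
    (hRra : ∀ w : X, Rr w ∈ q ∧ R (Rr w) = 0 ∧ (lam ^ 2) • i (Rr w) - A (Rr w) = w)
    (hRrb : ∀ u ∈ q, R u = 0 → Rr ((lam ^ 2) • i u - A u) = u)
    -- the Dirichlet operator `D = D_{λ²}^{A,R}`
    (D : bX →L[ℂ] Y)
    (hD1 : ∀ y : bX, D y ∈ q ∧ A (D y) = (lam ^ 2) • i (D y) ∧ R (D y) = y)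
    (hD2 : ∀ u ∈ q, A u = (lam ^ 2) • i u → D (R u) = u)
    -- `λ ∈ ρ(B₄)`: `SB = R(λ,B₄)`
    (SB : bX →L[ℂ] bX)
    (hSB1 : ∀ y : bX, lam • SB y - B₄ (SB y) = y)
    (hSB2 : ∀ y : bX, SB (lam • y - B₄ y) = y) :
    -- the block operator is a right inverse of `λ − 𝒜` and maps into `D(𝒜)`…
    (∀ (f : Y) (g : X) (y : bX),
      (lam • Rr (i f) + Rr g + D (SB y)) ∈ q ∧
      R (lam • Rr (i f) + Rr g + D (SB y)) = SB y ∧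
      lam • (lam • Rr (i f) + Rr g + D (SB y)) -
        ((lam ^ 2) • Rr (i f) - f + lam • Rr g + lam • D (SB y)) = f ∧
      lam • i ((lam ^ 2) • Rr (i f) - f + lam • Rr g + lam • D (SB y)) -
        A (lam • Rr (i f) + Rr g + D (SB y)) = g ∧
      lam • SB y - (B₁ (lam • Rr (i f) + Rr g + D (SB y)) +
        B₄ (B₂ (lam • Rr (i f) + Rr g + D (SB y))) + B₄ (SB y)) = y) ∧
    -- … and a left inverse on `D(𝒜)`
    (∀ (u v : Y) (y : bX), u ∈ q → R u = y →
      lam • Rr (i (lam • u - v)) + Rr (lam • i v - A u) +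
        D (SB (lam • y - (B₁ u + B₄ (B₂ u) + B₄ y))) = u ∧
      A (Rr (i (lam • u - v))) + lam • i (Rr (lam • i v - A u)) +
        lam • i (D (SB (lam • y - (B₁ u + B₄ (B₂ u) + B₄ y)))) = i v ∧
      SB (lam • y - (B₁ u + B₄ (B₂ u) + B₄ y)) = y) := by
  constructor
  · intro f g y
    obtain ⟨hq1, hR1, hE1⟩ := hRra (i f)
    obtain ⟨hq2, hR2, hE2⟩ := hRra g
    obtain ⟨hq3, hA3, hR3⟩ := hD1 (SB y)
    refine ⟨q.add_mem (q.add_mem (q.smul_mem _ hq1) hq2) hq3, ?_, by module, ?_, ?_⟩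
    · simp [map_add, map_smul, hR1, hR2, hR3]
    · simp only [map_add, map_smul, map_sub, ContinuousLinearMap.map_smul]
      linear_combination (norm := module) lam • hE1 + hE2 - hA3
    · rw [hB₁]
      simp only [neg_add_cancel, zero_add]
      exact hSB1 y
  · intro u v y hu hRu
    have hSBy : SB (lam • y - (B₁ u + B₄ (B₂ u) + B₄ y)) = y := by
      rw [hB₁]
      simpa using hSB2 y
    obtain ⟨hDq, hDA, hDR⟩ := hD1 y
    have hwq : u - D y ∈ q := q.sub_mem hu hDq
    have hwR : R (u - D y) = 0 := by simp [map_sub, hRu, hDR]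
    have hw := hRrb (u - D y) hwq hwR
    have key : lam • Rr (i (lam • u - v)) + Rr (lam • i v - A u)
        = Rr ((lam ^ 2) • i (u - D y) - A (u - D y)) := by
      rw [← map_smul, ← map_add]
      congr 1
      simp only [map_sub, map_smul, ContinuousLinearMap.map_smul]
      linear_combination (norm := module) - hDA
    have hsum : lam • Rr (i (lam • u - v)) + Rr (lam • i v - A u) = u - D y := by
      rw [key, hw]
    refine ⟨?_, ?_, hSBy⟩
    · rw [hSBy, hsum]
      abel
    · obtain ⟨_, _, hE⟩ := hRra (i (lam • u - v))
      have hi2 := congrArg (i : Y →L[ℂ] X) hsum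
      rw [hSBy]
      simp only [map_add, map_smul, map_sub, ContinuousLinearMap.map_smul] at hi2 hE ⊢
      linear_combination (norm := module) lam • hi2 - hE
end
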